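/- (Fourier coefficient of the dual function factors through a shorter average.) Let F be the dual function F(x) := 𝔼_{y,y',n ∈ 𝔽_p} over the shifted variables as below, v_l ∈ 𝔽_p^D, ξ_l ∈ 𝔽_p. Then the directional Fourier coefficient satisfies F̂(x; v_l; ξ_l) = 𝔼_{n ∈ 𝔽_p} [ 𝔼_{y ∈ 𝔽_p} θ(y) e_p(−n ξ_l) ∏_{i=1}^{l} f_i(x + n v_l + P_i(y) v_i) ∏_{i=l+1}^k e_p(P_i(y) ξ_i) ] · [ 𝔼_{y' ∈ 𝔽_p} conj(θ)(y') ∏_{i=1}^{l−1} conj(f_i)(x + n v_l + P_i(y') v_i) ∏_{i=l}^k e_p(−P_i(y') ξ_i) ], where F(x) := 𝔼_{y,y' ∈ 𝔽_p} θ(y) conj(θ(y')) [∏_{i=1}^{l−1} f_i(x + P_i(y)v_i − P_l(y')v_l) conj(f_i)(x + P_i(y')v_i − P_l(y')v_l)] f_l(x + P_l(y)v_l − P_l(y')v_l) ∏_{i=l+1}^k e_p((P_i(y)−P_i(y'))ξ_i). -/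

import Mathlib

open Finset

/-- The additive character `e_p(x) = exp(2πi x / p)` on `𝔽_p`. -/
noncomputable def ep (p : ℕ) (x : ZMod p) : ℂ :=
  Complex.exp (2 * Real.pi * Complex.I * (x.val : ℂ) / p)

/-- The weighted multilinear averaging operator
`G_{l,k}^θ(x) = 𝔼_y θ(y) ∏_{i=1}^l f_i(x + P_i(y) v_i) ∏_{i=l+1}^k e_p(P_i(y) ξ_i)`. -/
noncomputable def Gop (p D k l : ℕ) [NeZero p] (θ : ZMod p → ℂ)
    (f : Fin k → (Fin D → ZMod p) → ℂ) (v : Fin k → Fin D → ZMod p)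
    (P : Fin k → ZMod p → ZMod p) (ξ : Fin k → ZMod p) (x : Fin D → ZMod p) : ℂ :=
  (∑ y : ZMod p, θ y
      * (∏ i ∈ Finset.univ.filter (fun i : Fin k => i.val < l), f i (x + P i y • v i))
      * ∏ i ∈ Finset.univ.filter (fun i : Fin k => l ≤ i.val), ep p (P i y * ξ i)) / p

/-- The dual function `F_{l,k}^θ` associated to the weighted averaging operator. -/
noncomputable def Fdual (p D k l : ℕ) [NeZero p] (hl : 1 ≤ l) (hlk : l ≤ k)
    (θ : ZMod p → ℂ) (f : Fin k → (Fin D → ZMod p) → ℂ) (v : Fin k → Fin D → ZMod p)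
    (P : Fin k → ZMod p → ZMod p) (ξ : Fin k → ZMod p) (x : Fin D → ZMod p) : ℂ :=
  let li : Fin k := ⟨l - 1, by omega⟩
  (∑ y : ZMod p, ∑ y' : ZMod p, θ y * star (θ y')
      * (∏ i ∈ Finset.univ.filter (fun i : Fin k => i.val + 1 < l),
          f i (x + P i y • v i - P li y' • v li)
            * star (f i (x + P i y' • v i - P li y' • v li)))
      * f li (x + P li y • v li - P li y' • v li)
      * ∏ i ∈ Finset.univ.filter (fun i : Fin k => l ≤ i.val),
          ep p ((P i y - P i y') * ξ i)) / ((p : ℂ) * p)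

/-!
Both sides are triple averages over `(y, y', n)`. After the change of variable
`n ↦ n + P_l(y')` the shift `-P_l(y') v_l` in every argument of the dual function cancels,
the `i = l` factor joins the product over `i < l`, and the phase `e_p(-(n + P_l(y')) ξ_l)`
splits off the factor `e_p(-P_l(y') ξ_l)` of the `y'`-average; so the summands agree.
-/

lemma ep_eq_stdAddChar {p : ℕ} [NeZero p] (a : ZMod p) : ep p a = ZMod.stdAddChar a := by
  rw [ZMod.stdAddChar_apply, ZMod.toCircle_apply, ep]

lemma ep_add {p : ℕ} [NeZero p] (a b : ZMod p) : ep p (a + b) = ep p a * ep p b := by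
  simp only [ep_eq_stdAddChar, AddChar.map_add_eq_mul]

lemma ep_sub_mul {p : ℕ} [NeZero p] (a b c : ZMod p) :
    ep p ((a - b) * c) = ep p (a * c) * ep p (-(b * c)) := by
  rw [← ep_add]; ring_nf

lemma ep_neg_add_mul {p : ℕ} [NeZero p] (a b c : ZMod p) :
    ep p (-((a + b) * c)) = ep p (-(a * c)) * ep p (-(b * c)) := by
  rw [← ep_add]; ring_nf

section Reindexing

variable {α : Type*} [Fintype α]

lemma sum_sum_sum_div_mul (g : α → α → α → ℂ) (e : α → ℂ) (c : ℂ) :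
    ∑ n, (∑ y, ∑ y', g n y y') / c * e n = (∑ y, ∑ y', ∑ n, g n y y' * e n) / c := by
  simp only [div_mul_eq_mul_div, sum_mul, ← sum_div]
  congr 1
  rw [sum_comm]
  exact sum_congr rfl fun _ _ => sum_comm

lemma sum_sum_div_mul_sum_div (a b : α → α → ℂ) (c : ℂ) :
    ∑ n, (∑ y, a n y) / c * ((∑ y', b n y') / c)
      = (∑ y, ∑ y', ∑ n, a n y * b n y') / (c * c) := by
  simp only [div_mul_div_comm, sum_mul_sum, ← sum_div]
  congr 1
  rw [sum_comm]
  exact sum_congr rfl fun _ _ => sum_comm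

end Reindexing

lemma filter_val_lt_eq_insert {k l : ℕ} (hl : 1 ≤ l) (hlk : l ≤ k) :
    univ.filter (fun i : Fin k => i.val < l)
      = insert ⟨l - 1, by omega⟩ (univ.filter (fun i : Fin k => i.val + 1 < l)) := by
  ext i
  simp only [mem_filter, mem_univ, true_and, mem_insert, Fin.ext_iff]
  omega

lemma filter_le_val_succ_eq_insert {k l : ℕ} (hl : 1 ≤ l) (hlk : l ≤ k) :
    univ.filter (fun i : Fin k => l ≤ i.val + 1)
      = insert ⟨l - 1, by omega⟩ (univ.filter (fun i : Fin k => l ≤ i.val)) := by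
  ext i
  simp only [mem_filter, mem_univ, true_and, mem_insert, Fin.ext_iff]
  omega

/-- The directional Fourier coefficient of the dual function along `v_l` factors as an
average over `n` of a product of two shorter averages. -/
theorem dual_fourier_coeff_factors (p : ℕ) [Fact p.Prime] (D k l : ℕ)
    (hl : 2 ≤ l) (hlk : l ≤ k)
    (θ : ZMod p → ℂ) (f : Fin k → (Fin D → ZMod p) → ℂ) (v : Fin k → Fin D → ZMod p)
    (P : Fin k → ZMod p → ZMod p) (ξ : Fin k → ZMod p) (x : Fin D → ZMod p) :
    (∑ n : ZMod p,
        Fdual p D k l (by omega) hlk θ f v P ξ (x + n • v ⟨l - 1, by omega⟩)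
          * ep p (-(n * ξ ⟨l - 1, by omega⟩))) / p
      = (∑ n : ZMod p,
          ((∑ y : ZMod p, θ y * ep p (-(n * ξ ⟨l - 1, by omega⟩))
              * (∏ i ∈ Finset.univ.filter (fun i : Fin k => i.val < l),
                  f i (x + n • v ⟨l - 1, by omega⟩ + P i y • v i))
              * ∏ i ∈ Finset.univ.filter (fun i : Fin k => l ≤ i.val),
                  ep p (P i y * ξ i)) / p)
          * ((∑ y' : ZMod p, star (θ y')
              * (∏ i ∈ Finset.univ.filter (fun i : Fin k => i.val + 1 < l),
                  star (f i (x + n • v ⟨l - 1, by omega⟩ + P i y' • v i)))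
              * ∏ i ∈ Finset.univ.filter (fun i : Fin k => l ≤ i.val + 1),
                  ep p (-(P i y' * ξ i))) / p)) / p := by
  simp only [Fdual]
  set li : Fin k := ⟨l - 1, by omega⟩
  rw [sum_sum_sum_div_mul, sum_sum_div_mul_sum_div, div_div, div_div]
  congr 1
  refine sum_congr rfl fun y _ => sum_congr rfl fun y' _ => ?_
  refine (Fintype.sum_equiv (Equiv.addRight (P li y')) _ _ fun n => ?_).symm
  have hshift (w : Fin D → ZMod p) :
      x + (n + P li y') • v li + w - P li y' • v li = x + n • v li + w := by
    rw [add_smul]; abel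
  have hli_lt : li ∉ univ.filter (fun i : Fin k => i.val + 1 < l) := by simp [li]; omega
  have hli_le : li ∉ univ.filter (fun i : Fin k => l ≤ i.val) := by simp [li]; omega
  rw [filter_val_lt_eq_insert (by omega) hlk, filter_le_val_succ_eq_insert (by omega) hlk,
    prod_insert hli_lt, prod_insert hli_le]
  simp only [Equiv.coe_addRight, hshift, ep_sub_mul, ep_neg_add_mul, prod_mul_distrib]
  ring
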